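/- arXiv:1707.08512 — 8 statements merged into one kernel-verified Lean document; each statement's English description precedes it below -/
import Mathlib

section
/- Let H be a real Hilbert space and A : ℝ₊ × H → H a parameterized single-valued map that is uniformly M-Lipschitz and uniformly α-strongly monotone (α > 0) in its second variable. If A is semi-differentiable at x ∈ H, i.e. the limit D_sA(x)(w) := lim_{τ→0, w'→w} (A(τ, x+τw') − A(0,x))/τ exists for all w ∈ H, then the semi-derivative D_sA(x) : H → H is M-Lipschitz continuous and α-strongly monotone. -/
/-!
For each `τ > 0` the rescaled difference quotient `w ↦ τ⁻¹ • (A τ (x + τ • w) - A 0 x)` inherits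
the Lipschitz constant `M` and the monotonicity modulus `α` of `A τ`, because the dilation
`w ↦ x + τ • w` scales both sides of each inequality by the same power of `τ`. The
semi-derivative is the pointwise limit of these quotients as `τ → 0⁺`, and both inequalities
are closed conditions, so they pass to the limit.
-/

open Filter Topology
open scoped RealInnerProductSpace

section DiffQuotient

variable {E F : Type*} [NormedAddCommGroup E] [NormedAddCommGroup F]

lemma norm_sub_le_of_tendsto {ι : Type*} {l : Filter ι} [l.NeBot] {G : ι → E → F} {g : E → F}
    {M : ℝ} (hG : ∀ w, Tendsto (fun i => G i w) l (𝓝 (g w)))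
    (hLip : ∀ᶠ i in l, ∀ w₁ w₂, ‖G i w₂ - G i w₁‖ ≤ M * ‖w₂ - w₁‖) (w₁ w₂ : E) :
    ‖g w₂ - g w₁‖ ≤ M * ‖w₂ - w₁‖ :=
  le_of_tendsto ((hG w₂).sub (hG w₁)).norm (hLip.mono fun _ h => h w₁ w₂)

variable [NormedSpace ℝ E] [NormedSpace ℝ F]

noncomputable def diffQuotient (f : E → F) (x : E) (c : F) (τ : ℝ) (w : E) : F :=
  τ⁻¹ • (f (x + τ • w) - c)

lemma diffQuotient_sub (f : E → F) (x : E) (c : F) (τ : ℝ) (w₁ w₂ : E) :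
    diffQuotient f x c τ w₂ - diffQuotient f x c τ w₁ =
      τ⁻¹ • (f (x + τ • w₂) - f (x + τ • w₁)) := by
  simp only [diffQuotient, ← smul_sub, sub_sub_sub_cancel_right]

lemma add_smul_sub_add_smul (x : E) (τ : ℝ) (w₁ w₂ : E) :
    (x + τ • w₂) - (x + τ • w₁) = τ • (w₂ - w₁) := by
  rw [add_sub_add_left_eq_sub, smul_sub]

lemma norm_diffQuotient_sub_le {f : E → F} {M τ : ℝ} (hτ : 0 < τ)
    (hf : ∀ y₁ y₂ : E, ‖f y₂ - f y₁‖ ≤ M * ‖y₂ - y₁‖) (x : E) (c : F) (w₁ w₂ : E) :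
    ‖diffQuotient f x c τ w₂ - diffQuotient f x c τ w₁‖ ≤ M * ‖w₂ - w₁‖ := by
  rw [diffQuotient_sub, norm_smul, norm_inv, Real.norm_of_nonneg hτ.le]
  calc τ⁻¹ * ‖f (x + τ • w₂) - f (x + τ • w₁)‖
      ≤ τ⁻¹ * (M * ‖(x + τ • w₂) - (x + τ • w₁)‖) := by gcongr; exact hf _ _
    _ = M * ‖w₂ - w₁‖ := by
      rw [add_smul_sub_add_smul, norm_smul, Real.norm_of_nonneg hτ.le]
      field_simp

end DiffQuotient

section InnerProductSpace

variable {E : Type*} [NormedAddCommGroup E] [InnerProductSpace ℝ E]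

lemma le_inner_diffQuotient_sub {f : E → E} {α τ : ℝ} (hτ : 0 < τ)
    (hf : ∀ y₁ y₂ : E, α * ‖y₂ - y₁‖ ^ 2 ≤ ⟪f y₂ - f y₁, y₂ - y₁⟫) (x c : E) (w₁ w₂ : E) :
    α * ‖w₂ - w₁‖ ^ 2 ≤ ⟪diffQuotient f x c τ w₂ - diffQuotient f x c τ w₁, w₂ - w₁⟫ := by
  have h := hf (x + τ • w₁) (x + τ • w₂)
  rw [add_smul_sub_add_smul, norm_smul, Real.norm_of_nonneg hτ.le, real_inner_smul_right] at h
  rw [diffQuotient_sub, real_inner_smul_left]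
  calc α * ‖w₂ - w₁‖ ^ 2 = (τ ^ 2)⁻¹ * (α * (τ * ‖w₂ - w₁‖) ^ 2) := by field_simp
    _ ≤ (τ ^ 2)⁻¹ * (τ * ⟪f (x + τ • w₂) - f (x + τ • w₁), w₂ - w₁⟫) := by gcongr
    _ = τ⁻¹ * ⟪f (x + τ • w₂) - f (x + τ • w₁), w₂ - w₁⟫ := by field_simp

lemma le_inner_sub_of_tendsto {ι : Type*} {l : Filter ι} [l.NeBot] {G : ι → E → E} {g : E → E}
    {α : ℝ} (hG : ∀ w, Tendsto (fun i => G i w) l (𝓝 (g w)))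
    (hMon : ∀ᶠ i in l, ∀ w₁ w₂, α * ‖w₂ - w₁‖ ^ 2 ≤ ⟪G i w₂ - G i w₁, w₂ - w₁⟫) (w₁ w₂ : E) :
    α * ‖w₂ - w₁‖ ^ 2 ≤ ⟪g w₂ - g w₁, w₂ - w₁⟫ :=
  ge_of_tendsto (((hG w₂).sub (hG w₁)).inner tendsto_const_nhds) (hMon.mono fun _ h => h w₁ w₂)

end InnerProductSpace

variable {H : Type*} [NormedAddCommGroup H] [InnerProductSpace ℝ H] [CompleteSpace H]

theorem stmt4_general (A : ℝ → H → H) (M α : ℝ)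
    (hLip : ∀ t ≥ (0:ℝ), ∀ x₁ x₂ : H, ‖A t x₂ - A t x₁‖ ≤ M * ‖x₂ - x₁‖)
    (hMon : ∀ t ≥ (0:ℝ), ∀ x₁ x₂ : H, α * ‖x₂ - x₁‖ ^ 2 ≤ ⟪A t x₂ - A t x₁, x₂ - x₁⟫)
    (x : H) (DA : H → H)
    (hsemi : ∀ w : H,
      Tendsto (fun p : ℝ × H => (p.1)⁻¹ • (A p.1 (x + p.1 • p.2) - A 0 x))
        ((𝓝[>] (0:ℝ)) ×ˢ 𝓝 w) (𝓝 (DA w))) :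
    (∀ w₁ w₂ : H, ‖DA w₂ - DA w₁‖ ≤ M * ‖w₂ - w₁‖) ∧
    (∀ w₁ w₂ : H, α * ‖w₂ - w₁‖ ^ 2 ≤ ⟪DA w₂ - DA w₁, w₂ - w₁⟫) := by
  have hQ : ∀ w, Tendsto (fun τ => diffQuotient (A τ) x (A 0 x) τ w) (𝓝[>] 0) (𝓝 (DA w)) :=
    fun w => (hsemi w).comp (tendsto_id.prodMk tendsto_const_nhds)
  have hpos : ∀ᶠ τ in 𝓝[>] (0:ℝ), 0 < τ := self_mem_nhdsWithin
  exact ⟨norm_sub_le_of_tendsto hQ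
      (hpos.mono fun τ hτ => norm_diffQuotient_sub_le hτ (hLip τ hτ.le) x (A 0 x)),
    le_inner_sub_of_tendsto hQ
      (hpos.mono fun τ hτ => le_inner_diffQuotient_sub hτ (hMon τ hτ.le) x (A 0 x))⟩

theorem stmt4 (A : ℝ → H → H) (M α : ℝ) (hα : 0 < α)
    (hLip : ∀ t ≥ (0:ℝ), ∀ x₁ x₂ : H, ‖A t x₂ - A t x₁‖ ≤ M * ‖x₂ - x₁‖)
    (hMon : ∀ t ≥ (0:ℝ), ∀ x₁ x₂ : H, α * ‖x₂ - x₁‖ ^ 2 ≤ ⟪A t x₂ - A t x₁, x₂ - x₁⟫)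
    (x : H) (DA : H → H)
    (hsemi : ∀ w : H,
      Tendsto (fun p : ℝ × H => (p.1)⁻¹ • (A p.1 (x + p.1 • p.2) - A 0 x))
        ((𝓝[>] (0:ℝ)) ×ˢ 𝓝 w) (𝓝 (DA w))) :
    (∀ w₁ w₂ : H, ‖DA w₂ - DA w₁‖ ≤ M * ‖w₂ - w₁‖) ∧
    (∀ w₁ w₂ : H, α * ‖w₂ - w₁‖ ^ 2 ≤ ⟪DA w₂ - DA w₁, w₂ - w₁⟫) :=
  stmt4_general A M α hLip hMon x DA hsemi
end

section
/- Let f : ℝ₊ × ℝ → ℝ be defined by f(t,x) := |x − t|, let x = 0 and v = 0 ∈ ∂f(0,·)(0). Then for every τ > 0 and w ∈ ℝ the second-order difference quotient equals Δ²_τ f(0|0)(w) = (|w − 1| − 1)/τ, and the family (Δ²_τ f(0|0))_{τ>0} epi-converges as τ → 0 to the function equal to −∞ on [0,2] and +∞ on ℝ \ [0,2]. In particular the second epi-derivative d²_e f(0|0) is not a proper function and d²_e f(0|0)(0) ≠ 0. -/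
open Filter Topology

/-- Epi-convergence (Mosco = Painlevé–Kuratowski on ℝ) of a family of real-valued
functions `F τ` (τ > 0) to an extended-real-valued function `g` as τ → 0⁺. -/
def EpiConvTo (F : ℝ → ℝ → ℝ) (g : ℝ → EReal) : Prop :=
  (∀ w : ℝ, ∃ φ : ℝ → ℝ, Tendsto φ (𝓝[>] (0:ℝ)) (𝓝 w) ∧
    Filter.limsup (fun τ => ((F τ (φ τ) : ℝ) : EReal)) (𝓝[>] (0:ℝ)) ≤ g w) ∧
  (∀ w : ℝ, ∀ φ : ℝ → ℝ, Tendsto φ (𝓝[>] (0:ℝ)) (𝓝 w) →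
    g w ≤ Filter.liminf (fun τ => ((F τ (φ τ) : ℝ) : EReal)) (𝓝[>] (0:ℝ)))

/-- `g` is a proper extended-real-valued function. -/
def ProperE (g : ℝ → EReal) : Prop := (∀ w, g w ≠ ⊥) ∧ ∃ w, g w ≠ ⊤

/-- Second-order difference quotient of `f(t,x) = |x − t|` at `x = 0` for `v = 0`. -/
noncomputable def q6 (τ w : ℝ) : ℝ := (|w - 1| - 1) / τ

/-- The epi-limit: `−∞` on `[0,2]` and `+∞` outside. -/
noncomputable def g6 : ℝ → EReal := fun w => if w ∈ Set.Icc (0:ℝ) 2 then ⊥ else ⊤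

/-!
On `[0,2]` the numerator `|w - 1| - 1` of `q6 τ w` is `≤ 0`, and along the recovery sequence
`w_τ = 1 + (1 - √τ)(w - 1)` it is at most `-√τ`, so `q6 τ w_τ ≤ -1/√τ → -∞`.
Off `[0,2]` the numerator stays bounded away from `0` near `w`, and dividing by `τ → 0⁺`
sends every `q6 τ w_τ` with `w_τ → w` to `+∞`.
-/

noncomputable def recoverySeq (w τ : ℝ) : ℝ := 1 + (1 - √τ) * (w - 1)

lemma secondDiffQuot_abs_sub_eq_q6 {τ : ℝ} (hτ : 0 < τ) (w : ℝ) :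
    (|(0:ℝ) + τ * w - τ| - |(0:ℝ) - τ| - τ * (0 * w)) / τ ^ 2 = q6 τ w := by
  rw [show (0:ℝ) + τ * w - τ = τ * (w - 1) by ring, zero_sub, abs_neg, abs_mul,
    abs_of_pos hτ, q6]
  field_simp
  ring

lemma mem_Icc_zero_two_iff {w : ℝ} : w ∈ Set.Icc (0:ℝ) 2 ↔ |w - 1| ≤ 1 := by
  rw [abs_le, Set.mem_Icc]
  constructor <;> rintro ⟨h₁, h₂⟩ <;> constructor <;> linarith

lemma g6_of_mem_Icc {w : ℝ} (hw : w ∈ Set.Icc (0:ℝ) 2) : g6 w = ⊥ := if_pos hw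

lemma g6_of_notMem_Icc {w : ℝ} (hw : w ∉ Set.Icc (0:ℝ) 2) : g6 w = ⊤ := if_neg hw

lemma q6_recoverySeq_le {τ w : ℝ} (hτ₀ : 0 < τ) (hτ₁ : τ ≤ 1) (hw : |w - 1| ≤ 1) :
    q6 τ (recoverySeq w τ) ≤ -√τ⁻¹ := by
  have hsqrt : √τ ≤ 1 := Real.sqrt_le_one.2 hτ₁
  have hnum : |recoverySeq w τ - 1| - 1 ≤ -√τ := by
    rw [recoverySeq, add_sub_cancel_left, abs_mul, abs_of_nonneg (sub_nonneg.2 hsqrt)]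
    nlinarith
  calc q6 τ (recoverySeq w τ) ≤ -√τ / τ := div_le_div_of_nonneg_right hnum hτ₀.le
    _ = -√τ⁻¹ := by rw [neg_div, Real.sqrt_div_self', one_div, Real.sqrt_inv]

lemma tendsto_recoverySeq (w : ℝ) :
    Tendsto (recoverySeq w) (𝓝[>] (0:ℝ)) (𝓝 w) := by
  have hsqrt : Tendsto (√·) (𝓝[>] (0:ℝ)) (𝓝 0) :=
    (Real.continuous_sqrt.tendsto' 0 0 Real.sqrt_zero).mono_left nhdsWithin_le_nhds
  have := (tendsto_const_nhds (x := (1:ℝ))).add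
    (((tendsto_const_nhds (x := (1:ℝ))).sub hsqrt).mul_const (w - 1))
  show Tendsto (fun τ => 1 + (1 - √τ) * (w - 1)) _ _
  simpa using this

lemma tendsto_q6_recoverySeq_atBot {w : ℝ} (hw : w ∈ Set.Icc (0:ℝ) 2) :
    Tendsto (fun τ => q6 τ (recoverySeq w τ)) (𝓝[>] (0:ℝ)) atBot := by
  have hbound : ∀ᶠ τ in 𝓝[>] (0:ℝ), q6 τ (recoverySeq w τ) ≤ -√τ⁻¹ := by
    filter_upwards [Ioc_mem_nhdsGT zero_lt_one] with τ hτ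
    exact q6_recoverySeq_le hτ.1 hτ.2 (mem_Icc_zero_two_iff.1 hw)
  exact tendsto_atBot_mono' _ hbound <| tendsto_neg_atTop_atBot.comp <|
    Real.tendsto_sqrt_atTop.comp tendsto_inv_nhdsGT_zero

lemma tendsto_q6_atTop {w : ℝ} (hw : w ∉ Set.Icc (0:ℝ) 2) {φ : ℝ → ℝ}
    (hφ : Tendsto φ (𝓝[>] (0:ℝ)) (𝓝 w)) :
    Tendsto (fun τ => q6 τ (φ τ)) (𝓝[>] (0:ℝ)) atTop := by
  have hpos : 0 < |w - 1| - 1 := by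
    rw [mem_Icc_zero_two_iff, not_le] at hw
    linarith
  have hnum : Tendsto (fun τ => |φ τ - 1| - 1) (𝓝[>] (0:ℝ)) (𝓝 (|w - 1| - 1)) :=
    ((hφ.sub_const 1).abs).sub_const 1
  simpa only [q6, div_eq_mul_inv] using hnum.pos_mul_atTop hpos tendsto_inv_nhdsGT_zero

lemma epiConvTo_q6_g6 : EpiConvTo q6 g6 := by
  constructor
  · intro w
    by_cases hw : w ∈ Set.Icc (0:ℝ) 2
    · refine ⟨_, tendsto_recoverySeq w, ?_⟩
      rw [(EReal.tendsto_coe_nhds_bot_iff.2 (tendsto_q6_recoverySeq_atBot hw)).limsup_eq]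
      exact bot_le
    · exact ⟨fun _ => w, tendsto_const_nhds, by rw [g6_of_notMem_Icc hw]; exact le_top⟩
  · intro w φ hφ
    by_cases hw : w ∈ Set.Icc (0:ℝ) 2
    · rw [g6_of_mem_Icc hw]
      exact bot_le
    · rw [(EReal.tendsto_coe_nhds_top_iff.2 (tendsto_q6_atTop hw hφ)).liminf_eq]
      exact le_top

theorem stmt6 :
    (∀ τ > (0:ℝ), ∀ w : ℝ,
      (|(0:ℝ) + τ * w - τ| - |(0:ℝ) - τ| - τ * (0 * w)) / τ ^ 2 = q6 τ w) ∧
    EpiConvTo q6 g6 ∧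
    ¬ ProperE g6 ∧ g6 0 ≠ 0 := by
  have hg6_zero : g6 0 = ⊥ := g6_of_mem_Icc ⟨le_rfl, zero_le_two⟩
  refine ⟨fun τ hτ => secondDiffQuot_abs_sub_eq_q6 hτ, epiConvTo_q6_g6, ?_, ?_⟩
  · rintro ⟨hne_bot, -⟩
    exact hne_bot 0 hg6_zero
  · rw [hg6_zero]
    exact EReal.bot_ne_zero
end

section
/- Let f : ℝ₊ × ℝ → ℝ be defined by f(t,x) := |x − t²|, let x = 0 and v = 0 ∈ ∂f(0,·)(0). Then for every τ > 0 and w ∈ ℝ one has Δ²_τ f(0|0)(w) = (|w − τ| − τ)/τ, and the family (Δ²_τ f(0|0))_{τ>0} epi-converges as τ → 0 to the function g given by g(0) = −1 and g(w) = +∞ for w ≠ 0. In particular the second epi-derivative d²_e f(0|0) is proper, lower semi-continuous and convex, but d²_e f(0|0)(0) = −1 ≠ 0, so it is not positively homogeneous of degree two. -/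
open Filter Topology

/-- Convexity of an extended-real-valued function on ℝ. -/
def ConvexE (g : ℝ → EReal) : Prop :=
  ∀ x y : ℝ, ∀ a b : ℝ, 0 ≤ a → 0 ≤ b → a + b = 1 →
    g (a * x + b * y) ≤ (a : EReal) * g x + (b : EReal) * g y

/-- Second-order difference quotient of `f(t,x) = |x − t²|` at `x = 0` for `v = 0`. -/
noncomputable def q7 (τ w : ℝ) : ℝ := (|w - τ| - τ) / τ

/-- The epi-limit: `−1` at `0` and `+∞` elsewhere. -/
noncomputable def g7 : ℝ → EReal := fun w => if w = 0 then ((-1 : ℝ) : EReal) else ⊤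

/-! Since `|w - τ| ≥ 0` we have `q7 τ w ≥ -1`, with equality along `w = τ → 0`, while for `w ≠ 0`
the quotient behaves like `|w| / τ → +∞`. Hence the epi-limit is `-1` plus the indicator of the
convex closed set `{0}`; its nonzero value at `0` rules out homogeneity of degree two. -/

lemma diffQuotient_abs_sub_sq_eq_q7 {τ : ℝ} (hτ : 0 < τ) (w : ℝ) :
    (|(0:ℝ) + τ * w - τ ^ 2| - |(0:ℝ) - τ ^ 2| - τ * (0 * w)) / τ ^ 2 = q7 τ w := by
  have hnum : (0:ℝ) + τ * w - τ ^ 2 = τ * (w - τ) := by ring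
  have hbase : |(0:ℝ) - τ ^ 2| = τ ^ 2 := by rw [zero_sub, abs_neg, abs_sq]
  rw [hnum, abs_mul, abs_of_pos hτ, hbase, q7]
  field_simp
  ring

lemma neg_one_le_q7 {τ : ℝ} (hτ : 0 < τ) (w : ℝ) : -1 ≤ q7 τ w := by
  rw [q7, le_div_iff₀ hτ]
  linarith [abs_nonneg (w - τ)]

lemma q7_self {τ : ℝ} (hτ : τ ≠ 0) : q7 τ τ = -1 := by
  rw [q7, sub_self, abs_zero, zero_sub, neg_div, div_self hτ]

/-- Away from `0` the numerator `|w - τ| - τ` tends to `|w| > 0` while we divide by `τ → 0⁺`. -/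
lemma tendsto_q7_atTop {φ : ℝ → ℝ} {w : ℝ} (hφ : Tendsto φ (𝓝[>] 0) (𝓝 w)) (hw : w ≠ 0) :
    Tendsto (fun τ => q7 τ (φ τ)) (𝓝[>] 0) atTop := by
  have hid : Tendsto (fun τ : ℝ => τ) (𝓝[>] 0) (𝓝 0) := tendsto_nhdsWithin_of_tendsto_nhds tendsto_id
  have hnum : Tendsto (fun τ => |φ τ - τ| - τ) (𝓝[>] 0) (𝓝 |w|) := by
    simpa using ((hφ.sub hid).abs).sub hid
  simpa only [q7, div_eq_mul_inv] using
    hnum.pos_mul_atTop (abs_pos.2 hw) tendsto_inv_nhdsGT_zero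

@[simp] lemma g7_zero : g7 0 = ((-1 : ℝ) : EReal) := if_pos rfl

@[simp] lemma g7_of_ne_zero {w : ℝ} (hw : w ≠ 0) : g7 w = ⊤ := if_neg hw

lemma g7_ne_bot (w : ℝ) : g7 w ≠ ⊥ := by
  unfold g7
  split_ifs
  · exact EReal.coe_ne_bot _
  · exact top_ne_bot

lemma neg_one_le_g7 (w : ℝ) : ((-1 : ℝ) : EReal) ≤ g7 w := by
  unfold g7
  split_ifs
  · exact le_rfl
  · exact le_top

lemma coe_mul_g7_ne_bot {a : ℝ} (ha : 0 ≤ a) (w : ℝ) : (a : EReal) * g7 w ≠ ⊥ := by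
  by_cases hw : w = 0
  · rw [hw, g7_zero, ← EReal.coe_mul]
    exact EReal.coe_ne_bot _
  · rcases ha.eq_or_lt with rfl | ha
    · simp
    · rw [g7_of_ne_zero hw, EReal.coe_mul_top_of_pos ha]
      exact top_ne_bot

lemma exists_limsup_q7_le_g7 (w : ℝ) : ∃ φ : ℝ → ℝ, Tendsto φ (𝓝[>] (0:ℝ)) (𝓝 w) ∧
    limsup (fun τ => ((q7 τ (φ τ) : ℝ) : EReal)) (𝓝[>] (0:ℝ)) ≤ g7 w := by
  by_cases hw : w = 0
  · subst hw
    refine ⟨id, tendsto_nhdsWithin_of_tendsto_nhds tendsto_id, le_of_eq ?_⟩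
    have hconst : ∀ᶠ τ in 𝓝[>] (0:ℝ), ((q7 τ (id τ) : ℝ) : EReal) = ((-1 : ℝ) : EReal) := by
      filter_upwards [self_mem_nhdsWithin] with τ (hτ : (0:ℝ) < τ)
      rw [id, q7_self hτ.ne']
    rw [limsup_congr hconst, limsup_const, g7_zero]
  · exact ⟨fun _ => w, tendsto_const_nhds, by simp [hw]⟩

lemma g7_le_liminf_q7 {φ : ℝ → ℝ} {w : ℝ} (hφ : Tendsto φ (𝓝[>] (0:ℝ)) (𝓝 w)) :
    g7 w ≤ liminf (fun τ => ((q7 τ (φ τ) : ℝ) : EReal)) (𝓝[>] (0:ℝ)) := by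
  by_cases hw : w = 0
  · rw [hw, g7_zero]
    refine le_liminf_of_le (by isBoundedDefault) ?_
    filter_upwards [self_mem_nhdsWithin] with τ (hτ : (0:ℝ) < τ)
    exact EReal.coe_le_coe_iff.2 (neg_one_le_q7 hτ (φ τ))
  · have htop : Tendsto (fun τ => ((q7 τ (φ τ) : ℝ) : EReal)) (𝓝[>] (0:ℝ)) (𝓝 ⊤) :=
      EReal.tendsto_coe_nhds_top_iff.2 (tendsto_q7_atTop hφ hw)
    rw [g7_of_ne_zero hw, htop.liminf_eq]

lemma epiConvTo_q7_g7 : EpiConvTo q7 g7 :=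
  ⟨exists_limsup_q7_le_g7, fun _ _ => g7_le_liminf_q7⟩

lemma properE_g7 : ProperE g7 :=
  ⟨g7_ne_bot, 0, by rw [g7_zero]; exact EReal.coe_ne_top _⟩

lemma lowerSemicontinuous_g7 : LowerSemicontinuous g7 := by
  intro x y hy
  by_cases hx : x = 0
  · rw [hx, g7_zero] at hy
    exact Eventually.of_forall fun z => hy.trans_le (neg_one_le_g7 z)
  · filter_upwards [eventually_ne_nhds hx] with z hz
    rw [g7_of_ne_zero hz]
    exact hy.trans_le le_top

/-- With positive weights, a point off the effective domain `{0}` makes the right side `⊤`. -/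
lemma convexE_g7 : ConvexE g7 := by
  intro x y a b ha hb hab
  rcases ha.eq_or_lt with rfl | ha
  · obtain rfl : b = 1 := by linarith
    simp
  rcases hb.eq_or_lt with rfl | hb
  · obtain rfl : a = 1 := by linarith
    simp
  by_cases hx : x = 0
  · by_cases hy : y = 0
    · subst hx hy
      rw [mul_zero, mul_zero, add_zero, g7_zero, ← EReal.coe_mul, ← EReal.coe_mul,
        ← EReal.coe_add, EReal.coe_le_coe_iff]
      linarith
    · rw [g7_of_ne_zero hy, EReal.coe_mul_top_of_pos hb,
        EReal.add_top_of_ne_bot (coe_mul_g7_ne_bot ha.le x)]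
      exact le_top
  · rw [g7_of_ne_zero hx, EReal.coe_mul_top_of_pos ha,
      EReal.top_add_of_ne_bot (coe_mul_g7_ne_bot hb.le y)]
    exact le_top

lemma g7_two_mul_zero_ne : g7 (2 * 0) ≠ ((2 ^ 2 : ℝ) : EReal) * g7 0 := by
  rw [mul_zero, g7_zero, ← EReal.coe_mul, Ne, EReal.coe_eq_coe_iff]
  norm_num

theorem stmt7 :
    (∀ τ > (0:ℝ), ∀ w : ℝ,
      (|(0:ℝ) + τ * w - τ ^ 2| - |(0:ℝ) - τ ^ 2| - τ * (0 * w)) / τ ^ 2 = q7 τ w) ∧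
    EpiConvTo q7 g7 ∧
    ProperE g7 ∧ LowerSemicontinuous g7 ∧ ConvexE g7 ∧
    g7 0 = ((-1 : ℝ) : EReal) ∧ g7 0 ≠ 0 ∧
    ¬ (∀ lam > (0:ℝ), ∀ w : ℝ, g7 (lam * w) = ((lam ^ 2 : ℝ) : EReal) * g7 w) := by
  refine ⟨fun τ hτ w => diffQuotient_abs_sub_sq_eq_q7 hτ w, epiConvTo_q7_g7, properE_g7,
    lowerSemicontinuous_g7, convexE_g7, g7_zero, ?_, fun h => g7_two_mul_zero_ne (h 2 two_pos 0)⟩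
  rw [g7_zero]
  exact_mod_cast (by norm_num : (-1 : ℝ) ≠ 0)
end

section
/- Let H be a real Hilbert space, A : ℝ₊ × H → H a parameterized single-valued map and B : ℝ₊ × H ⇉ H a parameterized set-valued map. Let x ∈ H and v ∈ A(0,x) + B(0,x). If A is semi-differentiable at x, then A + B is proto-differentiable at x for v if and only if B is proto-differentiable at x for v − A(0,x), and in that case D_p(A+B)(x|v) = D_sA(x) + D_pB(x | v − A(0,x)). -/
open Filter Topology

variable {H : Type*} [NormedAddCommGroup H] [InnerProductSpace ℝ H] [CompleteSpace H]

/-- Outer (Painlevé–Kuratowski) limit as τ → 0⁺ of a family of subsets of a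
topological space. -/
def outerLim {X : Type*} [TopologicalSpace X] (S : ℝ → Set X) : Set X :=
  {x | ∃ t : ℕ → ℝ, (∀ n, 0 < t n) ∧ Tendsto t atTop (𝓝 0) ∧
    ∃ xs : ℕ → X, Tendsto xs atTop (𝓝 x) ∧ ∀ n, xs n ∈ S (t n)}

/-- Inner (Painlevé–Kuratowski) limit as τ → 0⁺ of a family of subsets of a
topological space. -/
def innerLim {X : Type*} [TopologicalSpace X] (S : ℝ → Set X) : Set X :=
  {x | ∀ t : ℕ → ℝ, (∀ n, 0 < t n) → Tendsto t atTop (𝓝 0) →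
    ∃ xs : ℕ → X, Tendsto xs atTop (𝓝 x) ∧ ∃ N : ℕ, ∀ n ≥ N, xs n ∈ S (t n)}

/-- Graph of the difference quotient `Δ_τ C(x|v)(w) = (C(τ, x+τw) − v)/τ`. -/
def grQuot (C : ℝ → H → Set H) (x v : H) (τ : ℝ) : Set (H × H) :=
  {p | v + τ • p.2 ∈ C τ (x + τ • p.1)}

/-- `C` is proto-differentiable at `x` for `v`: the graphs of the difference quotients
Painlevé–Kuratowski converge as τ → 0⁺. -/
def ProtoDiffAt (C : ℝ → H → Set H) (x v : H) : Prop :=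
  outerLim (grQuot C x v) ⊆ innerLim (grQuot C x v)

/-- The proto-derivative, as the set-valued map whose graph is the PK-limit of the
graphs of the difference quotients. -/
def protoDeriv (C : ℝ → H → Set H) (x v : H) : H → Set H :=
  fun w => {u | (w, u) ∈ outerLim (grQuot C x v)}

/-- The parameterized set-valued map `A + B`. -/
def sumMap (A : ℝ → H → H) (B : ℝ → H → Set H) : ℝ → H → Set H :=
  fun t y => {u | u - A t y ∈ B t y}

/-! The graph of the difference quotient of `A + B` is the graph of that of `B` sheared by the
difference quotient of `A`; since these quotients converge continuously to `D_sA(x)`, the outer and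
inner limits of the first family are those of the second sheared by `D_sA(x)`. -/

def shear {E F : Type*} [Sub F] (g : E → F) (p : E × F) : E × F :=
  (p.1, p.2 - g p.1)

section Shear

variable {E F : Type*} [AddGroup F]

@[simp]
lemma shear_shear_neg (g : E → F) (p : E × F) : shear g (shear (-g) p) = p := by
  simp [shear]

@[simp]
lemma shear_neg_shear (g : E → F) (p : E × F) : shear (-g) (shear g p) = p := by
  simp [shear]

lemma shear_surjective (g : E → F) : Function.Surjective (shear g) :=
  fun p => ⟨shear (-g) p, shear_shear_neg g p⟩

variable [TopologicalSpace E] [TopologicalSpace F] [IsTopologicalAddGroup F]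

lemma tendsto_shear_of_tendsto_uncurry {q : ℝ → E → F} {g : E → F}
    (hq : ∀ w, Tendsto (Function.uncurry q) (𝓝[>] 0 ×ˢ 𝓝 w) (𝓝 (g w)))
    {t : ℕ → ℝ} (ht : ∀ n, 0 < t n) (ht0 : Tendsto t atTop (𝓝 0))
    {ps : ℕ → E × F} {p : E × F} (hps : Tendsto ps atTop (𝓝 p)) :
    Tendsto (fun n => shear (q (t n)) (ps n)) atTop (𝓝 (shear g p)) := by
  have ht0' : Tendsto t atTop (𝓝[>] 0) :=
    tendsto_nhdsWithin_of_tendsto_nhds_of_eventually_within t ht0 (Eventually.of_forall ht)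
  have hfst := (continuous_fst.tendsto p).comp hps
  have hq' := (hq p.1).comp (ht0'.prodMk hfst)
  exact hfst.prodMk_nhds (((continuous_snd.tendsto p).comp hps).sub hq')

variable {S T : ℝ → Set (E × F)} {q : ℝ → E → F} {g : E → F}

lemma shear_mem_outerLim (hq : ∀ w, Tendsto (Function.uncurry q) (𝓝[>] 0 ×ˢ 𝓝 w) (𝓝 (g w)))
    (hST : ∀ τ > 0, ∀ p ∈ S τ, shear (q τ) p ∈ T τ) {p : E × F} (hp : p ∈ outerLim S) :
    shear g p ∈ outerLim T := by
  obtain ⟨t, ht, ht0, ps, hps, hmem⟩ := hp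
  exact ⟨t, ht, ht0, fun n => shear (q (t n)) (ps n),
    tendsto_shear_of_tendsto_uncurry hq ht ht0 hps, fun n => hST _ (ht n) _ (hmem n)⟩

lemma shear_mem_innerLim (hq : ∀ w, Tendsto (Function.uncurry q) (𝓝[>] 0 ×ˢ 𝓝 w) (𝓝 (g w)))
    (hST : ∀ τ > 0, ∀ p ∈ S τ, shear (q τ) p ∈ T τ) {p : E × F} (hp : p ∈ innerLim S) :
    shear g p ∈ innerLim T := by
  intro t ht ht0
  obtain ⟨ps, hps, N, hmem⟩ := hp t ht ht0
  exact ⟨fun n => shear (q (t n)) (ps n), tendsto_shear_of_tendsto_uncurry hq ht ht0 hps,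
    N, fun n hn => hST _ (ht n) _ (hmem n hn)⟩

variable (hq : ∀ w, Tendsto (Function.uncurry q) (𝓝[>] 0 ×ˢ 𝓝 w) (𝓝 (g w)))
  (hST : ∀ τ > 0, ∀ p, p ∈ S τ ↔ shear (q τ) p ∈ T τ)
include hq hST

lemma outerLim_eq_preimage_shear : outerLim S = shear g ⁻¹' outerLim T := by
  ext p
  refine ⟨shear_mem_outerLim hq fun τ hτ p => (hST τ hτ p).1, fun hp => ?_⟩
  simpa using shear_mem_outerLim (q := fun τ => -q τ) (g := -g) (fun w => (hq w).neg)
    (fun τ hτ p hp => (hST τ hτ _).2 (by simpa using hp)) hp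

lemma innerLim_eq_preimage_shear : innerLim S = shear g ⁻¹' innerLim T := by
  ext p
  refine ⟨shear_mem_innerLim hq fun τ hτ p => (hST τ hτ p).1, fun hp => ?_⟩
  simpa using shear_mem_innerLim (q := fun τ => -q τ) (g := -g) (fun w => (hq w).neg)
    (fun τ hτ p hp => (hST τ hτ _).2 (by simpa using hp)) hp

lemma outerLim_subset_innerLim_iff_of_shear :
    outerLim S ⊆ innerLim S ↔ outerLim T ⊆ innerLim T := by
  rw [outerLim_eq_preimage_shear hq hST, innerLim_eq_preimage_shear hq hST]
  exact (shear_surjective g).preimage_subset_preimage_iff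

end Shear

omit [CompleteSpace H] in
lemma mem_grQuot_sumMap_iff (A : ℝ → H → H) (B : ℝ → H → Set H) (x v : H) {τ : ℝ} (hτ : τ ≠ 0)
    (p : H × H) :
    p ∈ grQuot (sumMap A B) x v τ ↔
      shear (fun w => τ⁻¹ • (A τ (x + τ • w) - A 0 x)) p ∈ grQuot B x (v - A 0 x) τ := by
  simp only [grQuot, sumMap, shear, Set.mem_ofPred_eq, smul_sub, smul_inv_smul₀ hτ]
  rw [show v - A 0 x + (τ • p.2 - (A τ (x + τ • p.1) - A 0 x))
      = v + τ • p.2 - A τ (x + τ • p.1) by abel]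

theorem stmt12_general (A : ℝ → H → H) (B : ℝ → H → Set H) (x v : H)
    (DA : H → H)
    (hsemi : ∀ w : H,
      Tendsto (fun p : ℝ × H => (p.1)⁻¹ • (A p.1 (x + p.1 • p.2) - A 0 x))
        ((𝓝[>] (0:ℝ)) ×ˢ 𝓝 w) (𝓝 (DA w))) :
    (ProtoDiffAt (sumMap A B) x v ↔ ProtoDiffAt B x (v - A 0 x)) ∧
    (ProtoDiffAt B x (v - A 0 x) →
      ∀ w : H, protoDeriv (sumMap A B) x v w
        = {u : H | u - DA w ∈ protoDeriv B x (v - A 0 x) w}) := by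
  have hq : ∀ w, Tendsto (Function.uncurry fun τ w => τ⁻¹ • (A τ (x + τ • w) - A 0 x))
      (𝓝[>] 0 ×ˢ 𝓝 w) (𝓝 (DA w)) := hsemi
  have hST τ (hτ : 0 < τ) := mem_grQuot_sumMap_iff A B x v hτ.ne'
  refine ⟨outerLim_subset_innerLim_iff_of_shear hq hST, fun _ w => ?_⟩
  ext u
  exact Set.ext_iff.1 (outerLim_eq_preimage_shear hq hST) (w, u)

theorem stmt12 (A : ℝ → H → H) (B : ℝ → H → Set H) (x v : H)
    (hv : v - A 0 x ∈ B 0 x) (DA : H → H)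
    (hsemi : ∀ w : H,
      Tendsto (fun p : ℝ × H => (p.1)⁻¹ • (A p.1 (x + p.1 • p.2) - A 0 x))
        ((𝓝[>] (0:ℝ)) ×ˢ 𝓝 w) (𝓝 (DA w))) :
    (ProtoDiffAt (sumMap A B) x v ↔ ProtoDiffAt B x (v - A 0 x)) ∧
    (ProtoDiffAt B x (v - A 0 x) →
      ∀ w : H, protoDeriv (sumMap A B) x v w
        = {u : H | u - DA w ∈ protoDeriv B x (v - A 0 x) w}) :=
  stmt12_general A B x v DA hsemi
end

section
/- Let f : ℝ₊ × ℝ → ℝ be defined by f(t,x) := a(t)|x − b(t)|, where a : ℝ₊ → ℝ is differentiable at 0 with a(t) > 0 for all t ≥ 0, and b : ℝ₊ → ℝ is twice differentiable at 0 with b'(0) = 0. Let x ∈ ℝ with x > b(0) and v = a(0) (so v ∈ ∂f(0,·)(x)). Then f is twice epi-differentiable at x for v and d²_e f(x|v)(w) = a'(0)·w for all w ∈ ℝ. -/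
/-!
Since `x > b 0` and `b` is continuous at `0`, both `x + τ w - b τ` and `x - b τ` are positive for
small `τ > 0`, also when `w` is replaced by any `φ τ → w`. The absolute values then disappear and the
second-order quotient collapses to `(a τ - a 0) / τ * φ τ → a' w`. The quotients thus converge
continuously, which gives both halves of epi-convergence at once.
-/

open Filter Topology

theorem epiConvTo_of_tendsto {F : ℝ → ℝ → ℝ} {g : ℝ → ℝ}
    (h : ∀ w φ, Tendsto φ (𝓝[>] 0) (𝓝 w) → Tendsto (fun τ => F τ (φ τ)) (𝓝[>] 0) (𝓝 (g w))) :
    EpiConvTo F (fun w => (g w : EReal)) := by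
  have hE : ∀ w φ, Tendsto φ (𝓝[>] 0) (𝓝 w) →
      Tendsto (fun τ => ((F τ (φ τ) : ℝ) : EReal)) (𝓝[>] 0) (𝓝 (g w : EReal)) :=
    fun w φ hφ => EReal.tendsto_coe.mpr (h w φ hφ)
  exact ⟨fun w => ⟨fun _ => w, tendsto_const_nhds, (hE w _ tendsto_const_nhds).limsup_eq.le⟩,
    fun w φ hφ => (hE w φ hφ).liminf_eq.ge⟩

theorem mul_abs_sub_quotient_eq_of_pos {A A₀ τ x c w : ℝ} (hτ : τ ≠ 0)
    (hxw : 0 < x + τ * w - c) (hx : 0 < x - c) :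
    (A * |x + τ * w - c| - A * |x - c| - τ * (A₀ * w)) / τ ^ 2 = (A - A₀) / τ * w := by
  rw [abs_of_pos hxw, abs_of_pos hx]
  field_simp
  ring

theorem tendsto_mul_abs_sub_quotient {a b φ : ℝ → ℝ} {a' x w : ℝ}
    (ha : HasDerivWithinAt a a' (Set.Ioi 0) 0) (hb : ContinuousWithinAt b (Set.Ioi 0) 0)
    (hx : b 0 < x) (hφ : Tendsto φ (𝓝[>] 0) (𝓝 w)) :
    Tendsto (fun τ => (a τ * |x + τ * φ τ - b τ| - a τ * |x - b τ| - τ * (a 0 * φ τ)) / τ ^ 2)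
      (𝓝[>] 0) (𝓝 (a' * w)) := by
  have hslope : Tendsto (slope a 0) (𝓝[>] 0) (𝓝 a') :=
    (hasDerivWithinAt_iff_tendsto_slope' Set.self_notMem_Ioi).mp ha
  have hτ : Tendsto (fun τ : ℝ => τ) (𝓝[>] 0) (𝓝 0) := tendsto_nhdsWithin_of_tendsto_nhds tendsto_id
  have hpert : Tendsto (fun τ => x + τ * φ τ - b τ) (𝓝[>] 0) (𝓝 (x - b 0)) := by
    simpa using (tendsto_const_nhds.add (hτ.mul hφ)).sub hb.tendsto
  have hpos : 0 < x - b 0 := sub_pos.mpr hx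
  have hquot : ∀ᶠ τ in 𝓝[>] 0, slope a 0 τ * φ τ
      = (a τ * |x + τ * φ τ - b τ| - a τ * |x - b τ| - τ * (a 0 * φ τ)) / τ ^ 2 := by
    filter_upwards [self_mem_nhdsWithin, hpert.eventually (eventually_gt_nhds hpos),
      (tendsto_const_nhds.sub hb.tendsto).eventually (eventually_gt_nhds hpos)]
      with τ (hτ0 : 0 < τ) hxw hxb
    rw [mul_abs_sub_quotient_eq_of_pos hτ0.ne' hxw hxb, slope_def_field, sub_zero]
  exact (hslope.mul hφ).congr' hquot

theorem stmt15_general (a b b₁ : ℝ → ℝ) (a' : ℝ)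
    (ha : HasDerivWithinAt a a' (Set.Ici 0) 0)
    (hb1 : ∀ᶠ t in 𝓝[≥] (0:ℝ), HasDerivWithinAt b (b₁ t) (Set.Ici 0) t)
    (x : ℝ) (hx : b 0 < x) :
    EpiConvTo
      (fun τ w => (a τ * |x + τ * w - b τ| - a τ * |x - b τ| - τ * (a 0 * w)) / τ ^ 2)
      (fun w => ((a' * w : ℝ) : EReal)) := by
  have hb : ContinuousWithinAt b (Set.Ioi 0) 0 :=
    (hb1.self_of_nhdsWithin Set.self_mem_Ici).continuousWithinAt.mono Set.Ioi_subset_Ici_self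
  apply epiConvTo_of_tendsto
  intro _ _ hφ
  exact tendsto_mul_abs_sub_quotient (ha.mono Set.Ioi_subset_Ici_self) hb hx hφ

theorem stmt15 (a b b₁ : ℝ → ℝ) (a' b'' : ℝ)
    (ha : HasDerivWithinAt a a' (Set.Ici 0) 0)
    (hapos : ∀ t ≥ (0:ℝ), 0 < a t)
    (hb1 : ∀ᶠ t in 𝓝[≥] (0:ℝ), HasDerivWithinAt b (b₁ t) (Set.Ici 0) t)
    (hb2 : HasDerivWithinAt b₁ b'' (Set.Ici 0) 0)
    (hb10 : b₁ 0 = 0)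
    (x : ℝ) (hx : b 0 < x) :
    EpiConvTo
      (fun τ w => (a τ * |x + τ * w - b τ| - a τ * |x - b τ| - τ * (a 0 * w)) / τ ^ 2)
      (fun w => ((a' * w : ℝ) : EReal)) :=
  stmt15_general a b b₁ a' ha hb1 x hx
end

section
/- Let f : ℝ₊ × ℝ → ℝ be defined by f(t,x) := a(t)|x − b(t)|, where a : ℝ₊ → ℝ is differentiable at 0 with a(t) > 0 for all t ≥ 0, and b : ℝ₊ → ℝ is twice differentiable at 0 with b'(0) = 0. Let x = b(0) and v ∈ (−a(0), a(0)) (so v ∈ ∂f(0,·)(x)). Then f is twice epi-differentiable at x for v with d²_e f(x|v)(0) = ((a(0)−v)/2)·b''(0) − a(0)·max(b''(0), 0) and d²_e f(x|v)(w) = +∞ for w ≠ 0. In particular d²_e f(x|v) is proper, lower semi-continuous and convex. -/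
/-!
Write `d τ = b τ - b 0`, so that `d τ / τ ^ 2 → b'' / 2` by l'Hôpital (using `b'(0) = 0`). In terms
of `s = τ w` the numerator of the quotient is `a τ * |s - d τ| - a τ * |d τ| - v * s`; because
`|v| < a τ` it is minimal at the kink `s = d τ`, which gives the lower bound
`-(a τ * |d τ / τ ^ 2|) - v * (d τ / τ ^ 2) → -(a 0 * |b'' / 2|) - v * (b'' / 2)`, attained along
`w = d τ / τ → 0`. For `w ≠ 0` the quotient exceeds `(a τ - |v|) * |w| / τ` up to a bounded term,
so it tends to `⊤`.
-/
open Filter Topology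

-- `c + δ_{0}` in convex-analysis notation: the indicator of `{0}` shifted by `c`.
noncomputable def shiftedIndicatorZero (c : ℝ) : ℝ → EReal :=
  fun w => if w = 0 then (c : EReal) else ⊤

namespace shiftedIndicatorZero

variable (c : ℝ)

@[simp] lemma apply_zero : shiftedIndicatorZero c 0 = c := if_pos rfl

lemma apply_of_ne_zero {w : ℝ} (hw : w ≠ 0) : shiftedIndicatorZero c w = ⊤ := if_neg hw

lemma coe_le (w : ℝ) : (c : EReal) ≤ shiftedIndicatorZero c w := by
  unfold shiftedIndicatorZero; split_ifs <;> simp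

lemma ne_bot (w : ℝ) : shiftedIndicatorZero c w ≠ ⊥ :=
  ne_bot_of_le_ne_bot (EReal.coe_ne_bot c) (coe_le c w)

lemma coe_mul_ne_bot {r : ℝ} (hr : 0 ≤ r) (w : ℝ) : (r : EReal) * shiftedIndicatorZero c w ≠ ⊥ :=
  (EReal.mul_ne_bot _ _).2 ⟨.inl (EReal.coe_ne_bot r), .inr (ne_bot c w), .inl (EReal.coe_ne_top r),
    .inl (EReal.coe_nonneg.2 hr)⟩

lemma properE : ProperE (shiftedIndicatorZero c) :=
  ⟨ne_bot c, 0, by simp [shiftedIndicatorZero]⟩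

lemma convexE : ConvexE (shiftedIndicatorZero c) := by
  intro x y s t hs ht hst
  rcases hs.eq_or_lt with rfl | hs
  · obtain rfl : t = 1 := by linarith
    simp
  rcases ht.eq_or_lt with rfl | ht
  · obtain rfl : s = 1 := by linarith
    simp
  by_cases hxy : x = 0 ∧ y = 0
  · obtain ⟨rfl, rfl⟩ := hxy
    simp only [shiftedIndicatorZero, mul_zero, add_zero, if_true, ← EReal.coe_mul, ← EReal.coe_add,
      ← add_mul, hst, one_mul, le_refl]
  · refine le_top.trans_eq ?_
    rcases not_and_or.mp hxy with hx | hy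
    · rw [apply_of_ne_zero c hx, EReal.coe_mul_top_of_pos hs,
        EReal.top_add_of_ne_bot (coe_mul_ne_bot c ht.le y)]
    · rw [apply_of_ne_zero c hy, EReal.coe_mul_top_of_pos ht, add_comm,
        EReal.top_add_of_ne_bot (coe_mul_ne_bot c hs.le x)]

end shiftedIndicatorZero

theorem tendsto_sub_div_sq_of_hasDerivWithinAt {b b₁ : ℝ → ℝ} {b'' : ℝ}
    (hb1 : ∀ᶠ t in 𝓝[≥] 0, HasDerivWithinAt b (b₁ t) (Set.Ici 0) t)
    (hb2 : HasDerivWithinAt b₁ b'' (Set.Ici 0) 0) (hb10 : b₁ 0 = 0) :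
    Tendsto (fun τ => (b τ - b 0) / τ ^ 2) (𝓝[>] 0) (𝓝 (b'' / 2)) := by
  have hpos : ∀ᶠ τ in 𝓝[>] (0 : ℝ), 0 < τ := self_mem_nhdsWithin
  have hderiv : ∀ᶠ τ in 𝓝[>] 0, HasDerivAt (fun t => b t - b 0) (b₁ τ) τ := by
    filter_upwards [hb1.filter_mono (nhdsWithin_mono _ Set.Ioi_subset_Ici_self), hpos]
      with τ hτ hτ0
    exact (hτ.hasDerivAt (Ici_mem_nhds hτ0)).sub_const (b 0)
  have hsq : ∀ᶠ τ in 𝓝[>] (0 : ℝ), HasDerivAt (fun t => t ^ 2) (2 * τ) τ :=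
    Eventually.of_forall fun τ => by simpa using hasDerivAt_pow 2 τ
  have hb0 : Tendsto (fun t => b t - b 0) (𝓝[>] 0) (𝓝 0) := by
    have hcont := (hb1.self_of_nhdsWithin Set.self_mem_Ici).continuousWithinAt
    simpa using
      (hcont.tendsto.mono_left (nhdsWithin_mono _ Set.Ioi_subset_Ici_self)).sub_const (b 0)
  have hsq0 : Tendsto (fun t : ℝ => t ^ 2) (𝓝[>] 0) (𝓝 0) := by
    simpa using ((continuous_pow 2).tendsto (0 : ℝ)).mono_left nhdsWithin_le_nhds
  have hslope : Tendsto (fun τ => b₁ τ / τ) (𝓝[>] 0) (𝓝 b'') := by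
    refine ((hasDerivWithinAt_iff_tendsto_slope' (lt_irrefl 0)).1 hb2.Ioi_of_Ici).congr ?_
    intro τ
    simp [slope_def_field, hb10]
  refine HasDerivAt.lhopital_zero_nhdsGT hderiv hsq (hpos.mono fun τ hτ => by positivity) hb0 hsq0 ?_
  simpa only [div_div, mul_comm] using hslope.div_const 2

lemma neg_mul_abs_sub_mul_le {A v d : ℝ} (hv : |v| ≤ A) (s : ℝ) :
    -(A * |d|) - v * d ≤ A * |s - d| - A * |d| - v * s := by
  have := (le_abs_self (v * (s - d))).trans_eq (abs_mul v (s - d))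
  nlinarith [mul_le_mul_of_nonneg_right hv (abs_nonneg (s - d))]

lemma sub_abs_mul_abs_sub_le {A v d : ℝ} (hA : 0 ≤ A) (s : ℝ) :
    (A - |v|) * |s| - 2 * (A * |d|) ≤ A * |s - d| - A * |d| - v * s := by
  have h₁ := mul_le_mul_of_nonneg_left (abs_sub_abs_le_abs_sub s d) hA
  have h₂ := (le_abs_self (v * s)).trans_eq (abs_mul v s)
  nlinarith

-- `Δ²_τ f(0|v)(w)` for `f(τ, x) = A τ * |x - d τ|`.
noncomputable def absSecondQuotient (A d : ℝ → ℝ) (v τ w : ℝ) : ℝ :=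
  (A τ * |τ * w - d τ| - A τ * |d τ| - τ * (v * w)) / τ ^ 2

section absSecondQuotient

variable {A d : ℝ → ℝ} {v τ : ℝ}

lemma absSecondQuotient_eq (hτ : τ ≠ 0) :
    absSecondQuotient A d v τ (d τ / τ) = -(A τ * |d τ / τ ^ 2|) - v * (d τ / τ ^ 2) := by
  have hτ2 : 0 < τ ^ 2 := by positivity
  rw [absSecondQuotient, mul_div_cancel₀ _ hτ, sub_self, abs_zero, abs_div, abs_of_pos hτ2]
  field_simp
  ring

lemma le_absSecondQuotient (hτ : τ ≠ 0) (hv : |v| ≤ A τ) (w : ℝ) :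
    -(A τ * |d τ / τ ^ 2|) - v * (d τ / τ ^ 2) ≤ absSecondQuotient A d v τ w := by
  have hτ2 : 0 < τ ^ 2 := by positivity
  rw [absSecondQuotient, abs_div, abs_of_pos hτ2, ← mul_div_assoc, ← mul_div_assoc, ← neg_div,
    ← sub_div, mul_left_comm]
  exact div_le_div_of_nonneg_right (neg_mul_abs_sub_mul_le hv (τ * w)) hτ2.le

lemma sub_le_absSecondQuotient (hτ : 0 < τ) (hA : 0 ≤ A τ) (w : ℝ) :
    (A τ - |v|) * |w| * τ⁻¹ - 2 * (A τ * |d τ / τ ^ 2|) ≤ absSecondQuotient A d v τ w := by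
  have hτ2 : 0 < τ ^ 2 := by positivity
  have key := div_le_div_of_nonneg_right
    (sub_abs_mul_abs_sub_le (v := v) (d := d τ) hA (τ * w)) hτ2.le
  rw [abs_mul, abs_of_pos hτ, mul_left_comm v τ] at key
  refine le_trans (le_of_eq ?_) key
  rw [abs_div, abs_of_pos hτ2]
  field_simp

end absSecondQuotient

section EpiLimit

variable {A d : ℝ → ℝ} {A₀ D v : ℝ}

lemma exists_tendsto_limsup_absSecondQuotient_le (hA : Tendsto A (𝓝[>] 0) (𝓝 A₀))
    (hd : Tendsto (fun τ => d τ / τ ^ 2) (𝓝[>] 0) (𝓝 D)) (w : ℝ) :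
    ∃ φ : ℝ → ℝ, Tendsto φ (𝓝[>] 0) (𝓝 w) ∧
      limsup (fun τ => (absSecondQuotient A d v τ (φ τ) : EReal)) (𝓝[>] 0) ≤
        shiftedIndicatorZero (-(A₀ * |D|) - v * D) w := by
  rcases eq_or_ne w 0 with rfl | hw
  · refine ⟨fun τ => d τ / τ, ?_, le_of_eq ?_⟩
    · have hlim := hd.mul (tendsto_id.mono_right nhdsWithin_le_nhds)
      rw [mul_zero] at hlim
      refine hlim.congr' ?_
      filter_upwards [self_mem_nhdsWithin] with τ (hτ : 0 < τ)
      rw [id]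
      field_simp
    · have hL : Tendsto (fun τ => -(A τ * |d τ / τ ^ 2|) - v * (d τ / τ ^ 2)) (𝓝[>] 0)
          (𝓝 (-(A₀ * |D|) - v * D)) := ((hA.mul hd.abs).neg).sub (hd.const_mul v)
      rw [shiftedIndicatorZero.apply_zero, ← (EReal.tendsto_coe.2 hL).limsup_eq]
      refine limsup_congr ?_
      filter_upwards [self_mem_nhdsWithin] with τ (hτ : 0 < τ)
      rw [absSecondQuotient_eq hτ.ne']
  · exact ⟨fun _ => w, tendsto_const_nhds, by simp [shiftedIndicatorZero.apply_of_ne_zero _ hw]⟩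

lemma le_liminf_absSecondQuotient (hA : Tendsto A (𝓝[>] 0) (𝓝 A₀))
    (hd : Tendsto (fun τ => d τ / τ ^ 2) (𝓝[>] 0) (𝓝 D)) (hv : |v| < A₀) {w : ℝ} {φ : ℝ → ℝ}
    (hφ : Tendsto φ (𝓝[>] 0) (𝓝 w)) :
    shiftedIndicatorZero (-(A₀ * |D|) - v * D) w ≤
      liminf (fun τ => (absSecondQuotient A d v τ (φ τ) : EReal)) (𝓝[>] 0) := by
  have hvA : ∀ᶠ τ in 𝓝[>] 0, |v| < A τ := hA.eventually (eventually_gt_nhds hv)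
  rcases eq_or_ne w 0 with rfl | hw
  · have hL : Tendsto (fun τ => -(A τ * |d τ / τ ^ 2|) - v * (d τ / τ ^ 2)) (𝓝[>] 0)
        (𝓝 (-(A₀ * |D|) - v * D)) := ((hA.mul hd.abs).neg).sub (hd.const_mul v)
    rw [shiftedIndicatorZero.apply_zero, ← (EReal.tendsto_coe.2 hL).liminf_eq]
    refine liminf_le_liminf ?_
    filter_upwards [self_mem_nhdsWithin, hvA] with τ (hτ : 0 < τ) hvτ
    exact EReal.coe_le_coe_iff.2 (le_absSecondQuotient hτ.ne' hvτ.le _)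
  · have hgrow : Tendsto (fun τ => (A τ - |v|) * |φ τ| * τ⁻¹ - 2 * (A τ * |d τ / τ ^ 2|))
        (𝓝[>] 0) atTop := by
      have hpos : 0 < (A₀ - |v|) * |w| := mul_pos (sub_pos.2 hv) (abs_pos.2 hw)
      simpa only [sub_eq_add_neg] using
        (((hA.sub_const |v|).mul hφ.abs).pos_mul_atTop hpos tendsto_inv_nhdsGT_zero).atTop_add
          ((hA.mul hd.abs).const_mul 2).neg
    have htop : Tendsto (fun τ => absSecondQuotient A d v τ (φ τ)) (𝓝[>] 0) atTop := by
      refine tendsto_atTop_mono' _ ?_ hgrow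
      filter_upwards [self_mem_nhdsWithin, hvA] with τ (hτ : 0 < τ) hvτ
      exact sub_le_absSecondQuotient hτ ((abs_nonneg v).trans hvτ.le) _
    rw [(EReal.tendsto_coe_nhds_top_iff.2 htop).liminf_eq]
    exact le_top

theorem epiConvTo_absSecondQuotient (hA : Tendsto A (𝓝[>] 0) (𝓝 A₀))
    (hd : Tendsto (fun τ => d τ / τ ^ 2) (𝓝[>] 0) (𝓝 D)) (hv : |v| < A₀) :
    EpiConvTo (absSecondQuotient A d v) (shiftedIndicatorZero (-(A₀ * |D|) - v * D)) :=
  ⟨exists_tendsto_limsup_absSecondQuotient_le hA hd,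
    fun _ _ hφ => le_liminf_absSecondQuotient hA hd hv hφ⟩

end EpiLimit

theorem stmt16_general (a b b₁ : ℝ → ℝ) (a' b'' : ℝ)
    (ha : HasDerivWithinAt a a' (Set.Ici 0) 0)
    (hb1 : ∀ᶠ t in 𝓝[≥] (0:ℝ), HasDerivWithinAt b (b₁ t) (Set.Ici 0) t)
    (hb2 : HasDerivWithinAt b₁ b'' (Set.Ici 0) 0)
    (hb10 : b₁ 0 = 0)
    (v : ℝ) (hv₁ : -a 0 < v) (hv₂ : v < a 0) :
    EpiConvTo
      (fun τ w =>
        (a τ * |b 0 + τ * w - b τ| - a τ * |b 0 - b τ| - τ * (v * w)) / τ ^ 2)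
      (fun w => if w = 0
        then (((a 0 - v) / 2 * b'' - a 0 * max b'' 0 : ℝ) : EReal) else ⊤) ∧
    ProperE (fun w => if w = 0
        then (((a 0 - v) / 2 * b'' - a 0 * max b'' 0 : ℝ) : EReal) else ⊤) ∧
    LowerSemicontinuous (fun w => if w = 0
        then (((a 0 - v) / 2 * b'' - a 0 * max b'' 0 : ℝ) : EReal) else ⊤) ∧
    ConvexE (fun w => if w = 0
        then (((a 0 - v) / 2 * b'' - a 0 * max b'' 0 : ℝ) : EReal) else ⊤) := by
  have hA : Tendsto a (𝓝[>] 0) (𝓝 (a 0)) :=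
    ha.continuousWithinAt.tendsto.mono_left (nhdsWithin_mono _ Set.Ioi_subset_Ici_self)
  have hd := tendsto_sub_div_sq_of_hasDerivWithinAt hb1 hb2 hb10
  have hvalue : (a 0 - v) / 2 * b'' - a 0 * max b'' 0 = -(a 0 * |b'' / 2|) - v * (b'' / 2) := by
    rcases le_total 0 b'' with h | h
    · rw [max_eq_left h, abs_of_nonneg (by linarith)]; ring
    · rw [max_eq_right h, abs_of_nonpos (by linarith)]; ring
  have hquot : (fun τ w =>
      (a τ * |b 0 + τ * w - b τ| - a τ * |b 0 - b τ| - τ * (v * w)) / τ ^ 2) =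
      absSecondQuotient a (fun τ => b τ - b 0) v := by
    funext τ w
    rw [absSecondQuotient, abs_sub_comm (b 0) (b τ),
      show b 0 + τ * w - b τ = τ * w - (b τ - b 0) by ring]
  rw [hvalue, hquot]
  exact ⟨epiConvTo_absSecondQuotient hA hd (abs_lt.2 ⟨hv₁, hv₂⟩), shiftedIndicatorZero.properE _,
    continuous_of_discreteTopology.lowerSemicontinuous, shiftedIndicatorZero.convexE _⟩

theorem stmt16 (a b b₁ : ℝ → ℝ) (a' b'' : ℝ)
    (ha : HasDerivWithinAt a a' (Set.Ici 0) 0)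
    (hapos : ∀ t ≥ (0:ℝ), 0 < a t)
    (hb1 : ∀ᶠ t in 𝓝[≥] (0:ℝ), HasDerivWithinAt b (b₁ t) (Set.Ici 0) t)
    (hb2 : HasDerivWithinAt b₁ b'' (Set.Ici 0) 0)
    (hb10 : b₁ 0 = 0)
    (v : ℝ) (hv₁ : -a 0 < v) (hv₂ : v < a 0) :
    EpiConvTo
      (fun τ w =>
        (a τ * |b 0 + τ * w - b τ| - a τ * |b 0 - b τ| - τ * (v * w)) / τ ^ 2)
      (fun w => if w = 0
        then (((a 0 - v) / 2 * b'' - a 0 * max b'' 0 : ℝ) : EReal) else ⊤) ∧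
    ProperE (fun w => if w = 0
        then (((a 0 - v) / 2 * b'' - a 0 * max b'' 0 : ℝ) : EReal) else ⊤) ∧
    LowerSemicontinuous (fun w => if w = 0
        then (((a 0 - v) / 2 * b'' - a 0 * max b'' 0 : ℝ) : EReal) else ⊤) ∧
    ConvexE (fun w => if w = 0
        then (((a 0 - v) / 2 * b'' - a 0 * max b'' 0 : ℝ) : EReal) else ⊤) :=
  stmt16_general a b b₁ a' b'' ha hb1 hb2 hb10 v hv₁ hv₂
end

section
/- Let H be a real Hilbert space, f : H → ℝ ∪ {+∞} proper lower semi-continuous convex, x ∈ H with f(x) ∈ ℝ, and v ∈ ∂f(x). Then for every τ > 0 the conjugate of the second-order difference quotient satisfies (Δ²_τ f(x|v))* = Δ²_τ f*(v|x), where Δ²_τ f(x|v)(w) := (f(x+τw) − f(x) − τ⟨v,w⟩)/τ² and Δ²_τ f*(v|x)(u) := (f*(v+τu) − f*(v) − τ⟨x,u⟩)/τ². -/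
open Filter Topology
open scoped RealInnerProductSpace

variable {H : Type*} [NormedAddCommGroup H] [InnerProductSpace ℝ H] [CompleteSpace H]

/-- Convex subdifferential of an extended-real-valued function. -/
def Subdiff (f : H → EReal) (y : H) : Set H :=
  {v | ∀ z : H, (↑(⟪v, z - y⟫) : EReal) + f y ≤ f z}

/-- `f` is proper: it never takes the value `⊥` and is not identically `⊤`. -/
def ProperFun (f : H → EReal) : Prop := (∀ y, f y ≠ ⊥) ∧ ∃ y, f y ≠ ⊤

/-- Convexity of an extended-real-valued function. -/
def ConvexEFun (f : H → EReal) : Prop :=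
  ∀ x y : H, ∀ a b : ℝ, 0 ≤ a → 0 ≤ b → a + b = 1 →
    f (a • x + b • y) ≤ (a : EReal) * f x + (b : EReal) * f y

/-- Fenchel conjugate of an extended-real-valued function. -/
noncomputable def conjE (f : H → EReal) (u : H) : EReal :=
  ⨆ y : H, ((⟪u, y⟫ : ℝ) : EReal) - f y

/-!
Substituting `y = x + τ • w` and expanding `⟪v + τ • u, x + τ • w⟫` turns the supremum defining
the conjugate of `Δ²_τ f(x|v)` at `u` into `τ⁻² (sup_y (⟪v + τ • u, y⟫ - f y) - c)` for an explicit
real constant `c`. The value of `f*(v)` is the Fenchel equality, read off from the subgradient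
inequality at `x`.
-/

namespace EReal

theorem iSup_sub_coe {ι : Sort*} (a : ι → EReal) (c : ℝ) :
    ⨆ i, a i - c = (⨆ i, a i) - c :=
  let subCoe : EReal ≃o EReal :=
    Equiv.toOrderIso ⟨(· - c), (· + c), fun _ => sub_add_cancel, fun _ => add_sub_cancel_right⟩
      (fun _ _ h => sub_le_sub h le_rfl) (fun _ _ h => add_le_add_left h _)
  (subCoe.map_iSup a).symm

theorem coe_mul_iSup_of_pos {ι : Sort*} (a : ι → EReal) {t : ℝ} (ht : 0 < t) :
    (t : EReal) * ⨆ i, a i = ⨆ i, t * a i :=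
  have cancel {s : ℝ} (hs : s ≠ 0) (y : EReal) : (s⁻¹ : ℝ) * ((s : EReal) * y) = y := by
    rw [← mul_assoc, ← coe_mul, inv_mul_cancel₀ hs, coe_one, one_mul]
  let mulCoe : EReal ≃o EReal :=
    Equiv.toOrderIso ⟨((t : EReal) * ·), (((t⁻¹ : ℝ) : EReal) * ·), cancel ht.ne',
      fun y => by simpa using cancel (inv_ne_zero ht.ne') y⟩
      (fun _ _ h => mul_le_mul_of_nonneg_left h (mod_cast ht.le))
      (fun _ _ h => mul_le_mul_of_nonneg_left h (mod_cast (inv_pos.2 ht).le))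
  mulCoe.map_iSup a

theorem coe_sub_coe_mul_sub_coe {t : ℝ} (ht : 0 < t) {a b s c : ℝ} (h : a = t * (s - c - b))
    (e : EReal) : (a : EReal) - t * (e - b) = t * ((s - e) - c) := by
  induction e using EReal.rec with
  | bot => simp [coe_mul_bot_of_pos ht, coe_mul_top_of_pos ht]
  | top => simp [coe_mul_bot_of_pos ht, coe_mul_top_of_pos ht]
  | coe e =>
    norm_cast
    rw [h]
    ring

end EReal

section Conjugate

variable {E : Type*} [NormedAddCommGroup E] [InnerProductSpace ℝ E]

theorem conjE_eq_of_mem_subdiff {f : E → EReal} {x v : E} {r : ℝ} (hx : f x = r)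
    (hv : v ∈ Subdiff f x) : conjE f v = ↑(⟪v, x⟫ - r) := by
  refine le_antisymm (iSup_le fun y => ?_) <| by
    simpa [conjE, hx] using le_iSup (fun y => ↑⟪v, y⟫ - f y) x
  have hy : ((⟪v, y - x⟫ + r : ℝ) : EReal) ≤ f y := by simpa [hx] using hv y
  calc ↑⟪v, y⟫ - f y ≤ ↑⟪v, y⟫ - ((⟪v, y - x⟫ + r : ℝ) : EReal) := EReal.sub_le_sub le_rfl hy
    _ = ↑(⟪v, x⟫ - r) := by norm_cast; rw [inner_sub_right]; ring

/-- The difference quotient `Δ²_τ f(x|v)` of the paper, with `r` standing for the value `f x`. -/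
noncomputable def secondDiffQuot (f : E → EReal) (x : E) (r : ℝ) (v : E) (τ : ℝ) (w : E) : EReal :=
  ((τ ^ 2)⁻¹ : ℝ) * (f (x + τ • w) - ↑(r + τ * ⟪v, w⟫))

theorem conjE_secondDiffQuot (f : E → EReal) (x : E) (r : ℝ) (v : E) {τ : ℝ} (hτ : 0 < τ)
    (u : E) :
    conjE (secondDiffQuot f x r v τ) u = secondDiffQuot (conjE f) v (⟪v, x⟫ - r) x τ u := by
  have hτ2 : 0 < (τ ^ 2)⁻¹ := by positivity
  set c := (⟪v, x⟫ - r) + τ * ⟪x, u⟫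
  have pointwise (w : E) :
      ↑⟪u, w⟫ - ((τ ^ 2)⁻¹ : ℝ) * (f (x + τ • w) - ↑(r + τ * ⟪v, w⟫)) =
        ((τ ^ 2)⁻¹ : ℝ) * ((↑⟪v + τ • u, x + τ • w⟫ - f (x + τ • w)) - c) := by
    refine EReal.coe_sub_coe_mul_sub_coe hτ2 ?_ _
    simp only [c, inner_add_left, inner_add_right, real_inner_smul_left, real_inner_smul_right,
      real_inner_comm x u]
    field_simp
    ring
  have hsurj : Function.Surjective (fun w : E => x + τ • w) := fun y =>
    ⟨τ⁻¹ • (y - x), by simp [smul_smul, hτ.ne']⟩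
  calc conjE (secondDiffQuot f x r v τ) u
      = ⨆ w, ((τ ^ 2)⁻¹ : ℝ) * ((↑⟪v + τ • u, x + τ • w⟫ - f (x + τ • w)) - c) :=
        iSup_congr pointwise
    _ = ((τ ^ 2)⁻¹ : ℝ) * ((⨆ y, ↑⟪v + τ • u, y⟫ - f y) - c) := by
        rw [← EReal.coe_mul_iSup_of_pos _ hτ2, EReal.iSup_sub_coe,
          hsurj.iSup_comp (fun y => ↑⟪v + τ • u, y⟫ - f y)]

end Conjugate

theorem stmt17_general (f : H → EReal)
    (x : H) (r : ℝ) (hx : f x = ↑r) (v : H) (hv : v ∈ Subdiff f x) :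
    conjE f v = ↑(⟪v, x⟫ - r) ∧
    ∀ τ > (0:ℝ), ∀ u : H,
      conjE (fun w => (((τ ^ 2)⁻¹ : ℝ) : EReal) * (f (x + τ • w) - ↑(r + τ * ⟪v, w⟫))) u
        = (((τ ^ 2)⁻¹ : ℝ) : EReal) *
            (conjE f (v + τ • u) - ↑((⟪v, x⟫ - r) + τ * ⟪x, u⟫)) :=
  ⟨conjE_eq_of_mem_subdiff hx hv, fun _ hτ u => conjE_secondDiffQuot f x r v hτ u⟩

theorem stmt17 (f : H → EReal) (hproper : ProperFun f)
    (hlsc : LowerSemicontinuous f) (hconv : ConvexEFun f)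
    (x : H) (r : ℝ) (hx : f x = ↑r) (v : H) (hv : v ∈ Subdiff f x) :
    conjE f v = ↑(⟪v, x⟫ - r) ∧
    ∀ τ > (0:ℝ), ∀ u : H,
      conjE (fun w => (((τ ^ 2)⁻¹ : ℝ) : EReal) * (f (x + τ • w) - ↑(r + τ * ⟪v, w⟫))) u
        = (((τ ^ 2)⁻¹ : ℝ) : EReal) *
            (conjE f (v + τ • u) - ↑((⟪v, x⟫ - r) + τ * ⟪x, u⟫)) :=
  stmt17_general f x r hx v hv
end

section
/- Let H be a real Hilbert space, f : ℝ₊ × H → ℝ ∪ {+∞} with f(t,·) proper lsc convex for each t, x ∈ H with f(t,x) ∈ ℝ for all t ≥ 0, and v ∈ ∂f(0,·)(x). Define Φ(t) := f*(t,v) + f(t,x) − ⟨v,x⟩ ≥ 0, where f*(t,·) is the Fenchel conjugate of f(t,·). Then for all τ > 0 the conjugate of the second-order difference quotient satisfies (Δ²_τ f(x|v))* = Δ²_τ f*(v|x) + Φ(τ)/τ², where Δ²_τ f(x|v)(w) := (f(τ,x+τw) − f(τ,x) − τ⟨v,w⟩)/τ² and Δ²_τ f*(v|x)(u) := (f*(τ,v+τu)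 − f*(τ,v) − τ⟨x,u⟩)/τ². -/
/-!
Substituting `y = x + τ w` in the supremum defining the conjugate, the supremand of
`(Δ²_τ f(x|v))*(u)` at `w` is `τ⁻² (⟪v + τ u, y⟫ - f(τ, y))` plus a constant, i.e. a positive
affine image of the supremand of `f*(τ, v + τ u)` at `y`. Such affine maps commute with suprema
in `EReal`, which gives the identity; Fenchel–Young and the subgradient inequality give the
statements about `Φ`.
-/

open Filter Topology
open scoped RealInnerProductSpace

variable {H : Type*} [NormedAddCommGroup H] [InnerProductSpace ℝ H] [CompleteSpace H]

namespace EReal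

lemma coe_mul_add_coe_iSup {ι : Sort*} {c : ℝ} (hc : 0 < c) (C : ℝ) (g : ι → EReal) :
    ⨆ i, ((c : EReal) * g i + C) = (c : EReal) * (⨆ i, g i) + C := by
  have hc0 : (c : EReal) ≠ 0 := coe_ne_zero.2 hc.ne'
  have hmul : ContinuousAt (fun e : EReal => (c : EReal) * e) (⨆ i, g i) :=
    (continuousAt_mul (.inl hc0) (.inl hc0) (.inl (coe_ne_bot c)) (.inl (coe_ne_top c))).comp
      (continuousAt_const.prodMk continuousAt_id)
  have hadd : ContinuousAt (fun e : EReal => (c : EReal) * e + C) (⨆ i, g i) :=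
    (continuousAt_add (.inr (coe_ne_bot C)) (.inr (coe_ne_top C))).comp
      (hmul.prodMk continuousAt_const)
  refine (Monotone.map_iSup_of_continuousAt hadd (fun a b hab => ?_) ?_).symm
  · exact add_le_add_left (mul_le_mul_of_nonneg_left hab (by exact_mod_cast hc.le)) _
  · simp [coe_mul_bot_of_pos hc]

lemma coe_sub_coe_mul_sub_coe_s19 {c p q p' C : ℝ} (hc : 0 < c) (h : p + c * q = c * p' + C)
    (e : EReal) : (p : EReal) - c * (e - q) = c * (p' - e) + C := by
  induction e using EReal.rec with
  | bot => simp [coe_mul_bot_of_pos hc, coe_mul_top_of_pos hc]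
  | coe a =>
    norm_cast
    linear_combination h
  | top => simp [coe_mul_bot_of_pos hc, coe_mul_top_of_pos hc]

lemma coe_mul_sub_coe_add_coe {c : ℝ} (hc : 0 < c) (a b : ℝ) (A : EReal) :
    (c : EReal) * (A - a) + b = c * A + ↑(b - c * a) := by
  induction A using EReal.rec with
  | bot => simp [coe_mul_bot_of_pos hc]
  | coe d =>
    norm_cast
    ring
  | top => rw [top_sub_coe, coe_mul_top_of_pos hc, top_add_coe, top_add_coe]

end EReal

section Conjugate

variable {E : Type*} [NormedAddCommGroup E] [InnerProductSpace ℝ E]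

lemma coe_inner_sub_le_conjE (f : E → EReal) (u y : E) : (⟪u, y⟫ : EReal) - f y ≤ conjE f u :=
  le_iSup (fun y => (⟪u, y⟫ : EReal) - f y) y

lemma conjE_le_of_mem_subdiff {f : E → EReal} {x v : E} {r : ℝ} (hx : f x = r)
    (hv : v ∈ Subdiff f x) : conjE f v ≤ ↑(⟪v, x⟫ - r) := by
  refine iSup_le fun z => (EReal.sub_le_iff_le_add (.inr (EReal.coe_ne_top _))
    (.inr (EReal.coe_ne_bot _))).2 ?_
  have hz : ((⟪v, z - x⟫ + r : ℝ) : EReal) ≤ f z := by simpa [hx] using hv z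
  calc (⟪v, z⟫ : EReal) = ↑(⟪v, x⟫ - r) + ↑(⟪v, z - x⟫ + r) := by
        norm_cast
        rw [inner_sub_right]
        ring
    _ ≤ ↑(⟪v, x⟫ - r) + f z := by gcongr

lemma conjE_secondDiffQuotient (g : E → EReal) {τ : ℝ} (hτ : τ ≠ 0) (x v u : E) (r : ℝ) :
    conjE (fun w => (((τ ^ 2)⁻¹ : ℝ) : EReal) * (g (x + τ • w) - ↑(r + τ * ⟪v, w⟫))) u
      = (((τ ^ 2)⁻¹ : ℝ) : EReal) * conjE g (v + τ • u)
        + ↑((τ ^ 2)⁻¹ * (r - ⟪v, x⟫) - τ⁻¹ * ⟪u, x⟫) := by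
  have hpt : ∀ w, (⟪u, w⟫ : EReal) - ((τ ^ 2)⁻¹ : ℝ) * (g (x + τ • w) - ↑(r + τ * ⟪v, w⟫))
      = ((τ ^ 2)⁻¹ : ℝ) * (↑⟪v + τ • u, x + τ • w⟫ - g (x + τ • w))
        + ↑((τ ^ 2)⁻¹ * (r - ⟪v, x⟫) - τ⁻¹ * ⟪u, x⟫) := fun w =>
    EReal.coe_sub_coe_mul_sub_coe_s19 (by positivity) (by
      simp only [inner_add_left, inner_add_right, real_inner_smul_left, real_inner_smul_right]
      field_simp
      ring) _
  have hsurj : Function.Surjective fun w : E => x + τ • w :=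
    fun y => ⟨τ⁻¹ • (y - x), by simp [smul_smul, hτ]⟩
  rw [conjE, conjE, iSup_congr hpt, EReal.coe_mul_add_coe_iSup (by positivity),
    hsurj.iSup_comp fun y => (⟪v + τ • u, y⟫ : EReal) - g y]

end Conjugate

theorem stmt19_general (f : ℝ → H → EReal)
    (x : H) (r : ℝ → ℝ) (hx : ∀ t ≥ (0:ℝ), f t x = ↑(r t))
    (v : H) (hv : v ∈ Subdiff (f 0) x)
    (s : ℝ → ℝ) (hs : ∀ t ≥ (0:ℝ), conjE (f t) v = ↑(s t)) :
    (∀ t ≥ (0:ℝ), 0 ≤ s t + r t - ⟪v, x⟫) ∧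
    (s 0 + r 0 - ⟪v, x⟫ = 0) ∧
    ∀ τ > (0:ℝ), ∀ u : H,
      conjE (fun w => (((τ ^ 2)⁻¹ : ℝ) : EReal) *
          (f τ (x + τ • w) - ↑(r τ + τ * ⟪v, w⟫))) u
        = (((τ ^ 2)⁻¹ : ℝ) : EReal) *
            (conjE (f τ) (v + τ • u) - ↑(s τ + τ * ⟪x, u⟫))
          + ↑((s τ + r τ - ⟪v, x⟫) / τ ^ 2) := by
  have fenchel_young : ∀ t ≥ (0:ℝ), 0 ≤ s t + r t - ⟪v, x⟫ := by
    intro t ht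
    have h := coe_inner_sub_le_conjE (f t) v x
    rw [hx t ht, hs t ht, ← EReal.coe_sub, EReal.coe_le_coe_iff] at h
    linarith
  refine ⟨fenchel_young, ?_, fun τ hτ u => ?_⟩
  · have h := conjE_le_of_mem_subdiff (hx 0 le_rfl) hv
    rw [hs 0 le_rfl, EReal.coe_le_coe_iff] at h
    linarith [fenchel_young 0 le_rfl]
  · rw [conjE_secondDiffQuotient (f τ) hτ.ne', EReal.coe_mul_sub_coe_add_coe (by positivity),
      real_inner_comm x u]
    congr 2
    field_simp
    ring

theorem stmt19 (f : ℝ → H → EReal)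
    (hproper : ∀ t ≥ (0:ℝ), ProperFun (f t))
    (hlsc : ∀ t ≥ (0:ℝ), LowerSemicontinuous (f t))
    (hconv : ∀ t ≥ (0:ℝ), ConvexEFun (f t))
    (x : H) (r : ℝ → ℝ) (hx : ∀ t ≥ (0:ℝ), f t x = ↑(r t))
    (v : H) (hv : v ∈ Subdiff (f 0) x)
    (s : ℝ → ℝ) (hs : ∀ t ≥ (0:ℝ), conjE (f t) v = ↑(s t)) :
    (∀ t ≥ (0:ℝ), 0 ≤ s t + r t - ⟪v, x⟫) ∧
    (s 0 + r 0 - ⟪v, x⟫ = 0) ∧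
    ∀ τ > (0:ℝ), ∀ u : H,
      conjE (fun w => (((τ ^ 2)⁻¹ : ℝ) : EReal) *
          (f τ (x + τ • w) - ↑(r τ + τ * ⟪v, w⟫))) u
        = (((τ ^ 2)⁻¹ : ℝ) : EReal) *
            (conjE (f τ) (v + τ • u) - ↑(s τ + τ * ⟪x, u⟫))
          + ↑((s τ + r τ - ⟪v, x⟫) / τ ^ 2) :=
  stmt19_general f x r hx v hv s hs
end
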